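/- arXiv:2112.09921 — 2 statements merged into one kernel-verified Lean document; each statement's English description precedes it below -/
import Mathlib

section
/- If AG(w, l) holds (w's tally always strictly exceeds l's tally while both are eligible), then in any continuation of the STV count, l cannot be seated unless w is also seated. -/
/-- Status of a candidate at a round of the STV count. -/
inductive STVStatus : Type
  | eligible : STVStatus
  | seated : STVStatus
  | eliminated : STVStatus
  deriving DecidableEq

open STVStatus

/-!
The invariant is that `w` is always at least as far along as `l`: if `l` is seated then so
is `w`, and if `w` is eliminated then so is `l`. It holds initially, when both are eligible,
and survives every round. While both are eligible, `w` never has the strictly smallest tally,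
so `w` cannot be eliminated ahead of `l`; and `l` can only be seated alongside `w`, since
`tally w > tally l ≥ Q` in a quota round and everyone eligible is seated in the final round.
-/

namespace STVStatus

def Dominates (sw sl : STVStatus) : Prop :=
  (sl = seated → sw = seated) ∧ (sw = eliminated → sl = eliminated)

theorem dominates_eligible : Dominates eligible eligible :=
  ⟨nofun, nofun⟩

end STVStatus

section Transition

/-! A single round of the count, taking the statuses `s` and tallies `t` to the statuses `s'`. -/

variable {C : Type*} {w l : C} {s s' : C → STVStatus} {t : C → ℚ}

theorem seated_succ_of_dominates {Q : ℚ} (hdom : Dominates (s w) (s l))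
    (hw_persist : s w = seated → s' w = seated)
    (hl_persist : s l = eliminated → s' l = eliminated)
    (hseat_rule : s l = eligible → s' l = seated →
      ((Q ≤ t l ∧ ∀ c', s c' = eligible → Q ≤ t c' → s' c' = seated) ∨
       (∀ c', s c' = eligible → s' c' = seated)))
    (hAG : s w = eligible → s l = eligible → t l < t w) :
    s' l = seated → s' w = seated := by
  intro hl'
  cases hsl : s l with
  | seated => exact hw_persist (hdom.1 hsl)
  | eliminated => simp [hl_persist hsl] at hl'
  | eligible =>
    cases hsw : s w with
    | seated => exact hw_persist hsw
    | eliminated => simp [hdom.2 hsw] at hsl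
    | eligible =>
      rcases hseat_rule hsl hl' with ⟨hQ, hquota⟩ | hfinal
      · exact hquota w hsw (hQ.trans (hAG hsw hsl).le)
      · exact hfinal w hsw

theorem eliminated_succ_of_dominates (hwl : w ≠ l) (hdom : Dominates (s w) (s l))
    (hw_persist : s w = seated → s' w = seated)
    (hl_persist : s l = eliminated → s' l = eliminated)
    (helim_rule : s w = eligible → s' w = eliminated →
      ∀ c', s c' = eligible → c' ≠ w → t w < t c')
    (hAG : s w = eligible → s l = eligible → t l < t w) :
    s' w = eliminated → s' l = eliminated := by
  intro hw'
  cases hsw : s w with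
  | eliminated => exact hl_persist (hdom.2 hsw)
  | seated => simp [hw_persist hsw] at hw'
  | eligible =>
    cases hsl : s l with
    | eliminated => exact hl_persist hsl
    | seated => simp [hdom.1 hsl] at hsw
    | eligible =>
      exact (lt_asymm (helim_rule hsw hw' l hsl hwl.symm) (hAG hsw hsl)).elim

end Transition

/-- If `AG(w,l)` holds (`w`'s tally always strictly exceeds `l`'s while
both are eligible), then in any continuation of the STV count `l` cannot be seated
unless `w` is also seated.  The count dynamics: every candidate starts eligible; seated
and eliminated statuses persist; a candidate is eliminated only if it has the strictly
smallest tally among eligible candidates; and a candidate is seated from eligibility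
either because its tally reached the quota `Q` — in which case every eligible candidate
with tally at least `Q` is seated in that round — or in the final round, in which every
eligible candidate is seated. -/
theorem AG_implies_not_seated_without {C : Type*}
    (w l : C) (hwl : w ≠ l) (Q : ℚ)
    (status : ℕ → C → STVStatus) (tally : ℕ → C → ℚ)
    (hstart : ∀ c, status 0 c = eligible)
    (hseat_persist : ∀ r c, status r c = seated → status (r+1) c = seated)
    (helim_persist : ∀ r c, status r c = eliminated → status (r+1) c = eliminated)
    (helim_rule : ∀ r c, status r c = eligible → status (r+1) c = eliminated →
      ∀ c', status r c' = eligible → c' ≠ c → tally r c < tally r c')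
    (hseat_rule : ∀ r c, status r c = eligible → status (r+1) c = seated →
      ((Q ≤ tally r c ∧
        ∀ c', status r c' = eligible → Q ≤ tally r c' → status (r+1) c' = seated) ∨
       (∀ c', status r c' = eligible → status (r+1) c' = seated)))
    (hAG : ∀ r, status r w = eligible → status r l = eligible → tally r l < tally r w) :
    ∀ r, status r l = seated → status r w = seated := by
  have hdom : ∀ r, Dominates (status r w) (status r l) := by
    intro r
    induction r with
    | zero => simpa only [hstart] using dominates_eligible
    | succ r ih =>
      exact ⟨seated_succ_of_dominates ih (hseat_persist r w) (helim_persist r l)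
          (hseat_rule r l) (hAG r),
        eliminated_succ_of_dominates hwl ih (hseat_persist r w) (helim_persist r l)
          (helim_rule r w) (hAG r)⟩
  exact fun r => (hdom r).1
end

section
/- If c is a candidate for which there exist two other distinct candidates w1, w2 with AG(w1, c) and AG(w2, c), then c cannot be among the winners of a 2-seat STV election. -/
/-- If for candidate `c` there exist two other distinct candidates
`w1, w2` with `AG(w1, c)` and `AG(w2, c)` — whose soundness means `c` cannot be seated
unless `w1` is seated, and `c` cannot be seated unless `w2` is seated — then `c` cannot
be among the winners of a 2-seat STV election (seating `c` would force at least 3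
seated candidates). -/
theorem two_AG_rules_out_winner {C : Type*} [DecidableEq C]
    (winners : Finset C) (hcard : winners.card = 2)
    (c w1 w2 : C)
    (h12 : w1 ≠ w2) (h1c : w1 ≠ c) (h2c : w2 ≠ c)
    (hAG1 : c ∈ winners → w1 ∈ winners)
    (hAG2 : c ∈ winners → w2 ∈ winners) :
    c ∉ winners := by
  intro hc
  have h3 : ({w1, w2, c} : Finset C) ⊆ winners := by
    intro x hx
    simp only [Finset.mem_insert, Finset.mem_singleton] at hx
    rcases hx with rfl | rfl | rfl
    · exact hAG1 hc
    · exact hAG2 hc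
    · exact hc
  have hcard3 : ({w1, w2, c} : Finset C).card = 3 := by
    rw [Finset.card_insert_of_notMem (by simp [h12, h1c]),
        Finset.card_insert_of_notMem (by simp [h2c])]
    simp
  have := Finset.card_le_card h3
  omega
end
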